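/- For every positive integer s, the number 6·2^s − 3 cannot be written in the form (2^a − 1) + (2^b − 1) for any natural numbers a and b. -/
import Mathlib

theorem stmt_0 (s : ℕ) (hs : 0 < s) (a b : ℕ) :
    6 * 2 ^ s - 3 ≠ (2 ^ a - 1) + (2 ^ b - 1) := by
  intro h
  have ha : 1 ≤ 2 ^ a := Nat.one_le_two_pow
  have hb : 1 ≤ 2 ^ b := Nat.one_le_two_pow
  obtain ⟨s', rfl⟩ : ∃ s', s = s' + 1 := ⟨s - 1, by omega⟩
  have hspow : 2 ^ (s' + 1) = 2 * 2 ^ s' := by ring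
  have hs1 : 1 ≤ 2 ^ s' := Nat.one_le_two_pow
  have h1 : 6 * 2 ^ (s' + 1) = 2 ^ a + 2 ^ b + 1 := by omega
  rcases a with _ | a'
  · rcases b with _ | b'
    · simp at h1; omega
    · have hbpow : 2 ^ (b' + 1) = 2 * 2 ^ b' := by ring
      have h2 : 6 * 2 ^ s' = 2 ^ b' + 1 := by simp at h1; omega
      rcases b' with _ | b''
      · simp at h2; omega
      · have : 2 ^ (b'' + 1) = 2 * 2 ^ b'' := by ring
        omega
  · rcases b with _ | b'
    · have hapow : 2 ^ (a' + 1) = 2 * 2 ^ a' := by ring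
      have h2 : 6 * 2 ^ s' = 2 ^ a' + 1 := by simp at h1; omega
      rcases a' with _ | a''
      · simp at h2; omega
      · have : 2 ^ (a'' + 1) = 2 * 2 ^ a'' := by ring
        omega
    · have hapow : 2 ^ (a' + 1) = 2 * 2 ^ a' := by ring
      have hbpow : 2 ^ (b' + 1) = 2 * 2 ^ b' := by ring
      omega
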